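/- Let X = (ℓ²₂, ℓ∞₂) be the couple consisting of ℝ² with the Euclidean norm ‖(x,y)‖₀ = √(x²+y²) and ℝ² with the sup norm ‖(x,y)‖₁ = max(|x|,|y|). Then the K-divisibility constant satisfies γ(X) > 1; that is, the couple (ℓ²₂, ℓ∞₂) is not exactly K-divisible. -/

import Mathlib

open Filter Topology

/-- The K-functional for the couple `X = (ℓ²₂, ℓ∞₂)` on `ℝ²`. -/
noncomputable def Kcouple (t : ℝ) (α : ℝ × ℝ) : ℝ :=
  sInf {s : ℝ | ∃ β : ℝ × ℝ,
    s = Real.sqrt ((α.1 - β.1) ^ 2 + (α.2 - β.2) ^ 2) + t * max |β.1| |β.2|}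

/-- `C` is a K-divisibility constant for the couple `X = (ℓ²₂, ℓ∞₂)`. -/
def KDivConst (C : ℝ) : Prop :=
  ∀ (a : ℝ × ℝ) (φ : ℕ → ℝ → ℝ),
    (∀ n t, 0 < t → 0 < φ n t) →
    (∀ n, ConcaveOn ℝ (Set.Ioi (0 : ℝ)) (φ n)) →
    Summable (fun n => φ n 1) →
    (∀ t, 0 < t → Kcouple t a ≤ ∑' n, φ n t) →
    ∃ b : ℕ → ℝ × ℝ,
      Tendsto (fun N => ∑ n ∈ Finset.range N, b n) atTop (𝓝 a) ∧
      ∀ n t, 0 < t → Kcouple t (b n) ≤ C * φ n t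

lemma cs2 (c1 c2 x y : ℝ) : c1*x + c2*y ≤ Real.sqrt (c1^2+c2^2) * Real.sqrt (x^2+y^2) := by
  have h1 : (0:ℝ) ≤ c1^2+c2^2 := by positivity
  have h2 : (0:ℝ) ≤ x^2+y^2 := by positivity
  have s1 := Real.sq_sqrt h1
  have s2 := Real.sq_sqrt h2
  have n1 := Real.sqrt_nonneg (c1^2+c2^2)
  have n2 := Real.sqrt_nonneg (x^2+y^2)
  nlinarith [sq_nonneg (c1*y - c2*x), sq_nonneg (Real.sqrt (c1^2+c2^2) * Real.sqrt (x^2+y^2) - c1*x - c2*y), sq_nonneg (Real.sqrt (c1^2+c2^2) * Real.sqrt (x^2+y^2) + c1*x + c2*y), mul_nonneg n1 n2]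

lemma sqrt_tri (x1 x2 y1 y2 : ℝ) :
    Real.sqrt ((x1+y1)^2+(x2+y2)^2) ≤ Real.sqrt (x1^2+x2^2) + Real.sqrt (y1^2+y2^2) := by
  have h1 : (0:ℝ) ≤ x1^2+x2^2 := by positivity
  have h2 : (0:ℝ) ≤ y1^2+y2^2 := by positivity
  have n1 := Real.sqrt_nonneg (x1^2+x2^2)
  have n2 := Real.sqrt_nonneg (y1^2+y2^2)
  have cs := cs2 x1 x2 y1 y2
  have key : (x1+y1)^2+(x2+y2)^2 ≤ (Real.sqrt (x1^2+x2^2) + Real.sqrt (y1^2+y2^2))^2 := by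
    have s1 := Real.sq_sqrt h1
    have s2 := Real.sq_sqrt h2
    nlinarith [cs]
  calc Real.sqrt ((x1+y1)^2+(x2+y2)^2) ≤ Real.sqrt ((Real.sqrt (x1^2+x2^2) + Real.sqrt (y1^2+y2^2))^2) :=
        Real.sqrt_le_sqrt key
    _ = _ := Real.sqrt_sq (by positivity)

-- max vs euclid
lemma max_le_norm (x y : ℝ) : max |x| |y| ≤ Real.sqrt (x^2+y^2) := by
  rcases le_total |x| |y| with h | h
  · rw [max_eq_right h]
    calc |y| = Real.sqrt (y^2) := (Real.sqrt_sq_eq_abs y).symm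
      _ ≤ _ := Real.sqrt_le_sqrt (by nlinarith [sq_nonneg x])
  · rw [max_eq_left h]
    calc |x| = Real.sqrt (x^2) := (Real.sqrt_sq_eq_abs x).symm
      _ ≤ _ := Real.sqrt_le_sqrt (by nlinarith [sq_nonneg y])

lemma norm_le_sqrt2_max (x y : ℝ) : Real.sqrt (x^2+y^2) ≤ Real.sqrt 2 * max |x| |y| := by
  have h : x^2 + y^2 ≤ 2 * (max |x| |y|)^2 := by
    have hx : |x| ≤ max |x| |y| := le_max_left _ _
    have hy : |y| ≤ max |x| |y| := le_max_right _ _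
    nlinarith [abs_nonneg x, abs_nonneg y, sq_abs x, sq_abs y]
  calc Real.sqrt (x^2+y^2) ≤ Real.sqrt (2 * (max |x| |y|)^2) := Real.sqrt_le_sqrt h
    _ = Real.sqrt 2 * max |x| |y| := by
        rw [Real.sqrt_mul (by norm_num), Real.sqrt_sq (le_trans (abs_nonneg x) (le_max_left _ _))]


lemma Kc_set_nonempty (t : ℝ) (b : ℝ × ℝ) :
    {s : ℝ | ∃ β : ℝ × ℝ,
      s = Real.sqrt ((b.1 - β.1) ^ 2 + (b.2 - β.2) ^ 2) + t * max |β.1| |β.2|}.Nonempty :=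
  ⟨_, ⟨b, rfl⟩⟩

lemma Kc_bddBelow (t : ℝ) (ht : 0 ≤ t) (b : ℝ × ℝ) :
    BddBelow {s : ℝ | ∃ β : ℝ × ℝ,
      s = Real.sqrt ((b.1 - β.1) ^ 2 + (b.2 - β.2) ^ 2) + t * max |β.1| |β.2|} := by
  refine ⟨0, ?_⟩
  rintro s ⟨β, rfl⟩
  have h1 := Real.sqrt_nonneg ((b.1 - β.1) ^ 2 + (b.2 - β.2) ^ 2)
  have h2 : 0 ≤ max |β.1| |β.2| := le_trans (abs_nonneg _) (le_max_left _ _)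
  positivity

lemma Kc_ub (t : ℝ) (ht : 0 ≤ t) (b β : ℝ × ℝ) :
    Kcouple t b ≤ Real.sqrt ((b.1 - β.1) ^ 2 + (b.2 - β.2) ^ 2) + t * max |β.1| |β.2| :=
  csInf_le (Kc_bddBelow t ht b) ⟨β, rfl⟩

lemma Kc_lb (t : ℝ) (b : ℝ × ℝ) (L : ℝ)
    (h : ∀ β : ℝ × ℝ, L ≤ Real.sqrt ((b.1 - β.1) ^ 2 + (b.2 - β.2) ^ 2) + t * max |β.1| |β.2|) :
    L ≤ Kcouple t b := by
  refine le_csInf (Kc_set_nonempty t b) ?_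
  rintro s ⟨β, rfl⟩
  exact h β

lemma concaveOn_min_const (c : ℝ) : ConcaveOn ℝ (Set.Ioi (0:ℝ)) (fun t : ℝ => min t c) := by
  refine ⟨convex_Ioi 0, ?_⟩
  intro x hx y hy a b ha hb hab
  simp only [smul_eq_mul]
  refine le_min ?_ ?_
  · have h1 := mul_le_mul_of_nonneg_left (min_le_left x c) ha
    have h2 := mul_le_mul_of_nonneg_left (min_le_left y c) hb
    linarith
  · have h1 := mul_le_mul_of_nonneg_left (min_le_right x c) ha
    have h2 := mul_le_mul_of_nonneg_left (min_le_right y c) hb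
    have h3 : a * c + b * c = c := by rw [← add_mul, hab, one_mul]
    linarith

lemma concave_chord {φ : ℝ → ℝ} (hc : ConcaveOn ℝ (Set.Ioi (0:ℝ)) φ) {x y z : ℝ}
    (hx : 0 < x) (hxy : x < y) (hyz : y < z) :
    (z - y) * φ x + (y - x) * φ z ≤ (z - x) * φ y := by
  have hzx : (0:ℝ) < z - x := by linarith
  have key := hc.2 (Set.mem_Ioi.mpr hx) (Set.mem_Ioi.mpr (by linarith : (0:ℝ) < z))
    (show (0:ℝ) ≤ (z - y)/(z - x) from div_nonneg (by linarith) hzx.le)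
    (show (0:ℝ) ≤ (y - x)/(z - x) from div_nonneg (by linarith) hzx.le)
    (by field_simp; ring)
  simp only [smul_eq_mul] at key
  have hpoint : (z - y)/(z - x) * x + (y - x)/(z - x) * z = y := by
    field_simp
    ring
  rw [hpoint] at key
  have := mul_le_mul_of_nonneg_left key hzx.le
  calc (z - y) * φ x + (y - x) * φ z
      = (z - x) * ((z - y)/(z - x) * φ x + (y - x)/(z - x) * φ z) := by
        field_simp
    _ ≤ (z - x) * φ y := this

lemma concave_pos_lower {φ : ℝ → ℝ} (hc : ConcaveOn ℝ (Set.Ioi (0:ℝ)) φ)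
    (hp : ∀ t, 0 < t → 0 < φ t) : ∀ t, 0 < t → min 1 t * φ 1 ≤ φ t := by
  intro t ht
  have hφ1 : 0 < φ 1 := hp 1 one_pos
  rcases le_total 1 t with h | h
  · rw [min_eq_left h, one_mul]
    rcases eq_or_lt_of_le h with rfl | hlt
    · exact le_rfl
    by_contra hcon
    push_neg at hcon
    have hd : 0 < φ 1 - φ t := by linarith
    have hφt : 0 < φ t := hp t ht
    obtain ⟨s, hs1, hs2⟩ : ∃ s, t < s ∧ (φ 1 - φ t) * (s - 1) = (t - 1) * (φ 1 + 1) := by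
      refine ⟨1 + (t - 1) * (φ 1 + 1) / (φ 1 - φ t), ?_, by field_simp; ring⟩
      have hnum : 0 < (t - 1) * (φ 1 + 1) / (φ 1 - φ t) - (t - 1) := by
        rw [sub_pos, lt_div_iff₀ hd]
        nlinarith
      linarith
    have hch := concave_chord hc one_pos hlt hs1
    have hφs : 0 < φ s := hp s (by linarith)
    have hst : (φ 1 - φ t) * (s - t) = (t - 1) * (φ t + 1) := by linear_combination hs2
    have m := mul_le_mul_of_nonneg_left hch hd.le
    have e1 : (φ 1 - φ t) * ((s - t) * φ 1) = (t - 1) * (φ t + 1) * φ 1 := by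
      linear_combination φ 1 * hst
    have e2 : (φ 1 - φ t) * ((s - 1) * φ t) = (t - 1) * (φ 1 + 1) * φ t := by
      linear_combination φ t * hs2
    have e3 : 0 < (φ 1 - φ t) * ((t - 1) * φ s) :=
      mul_pos hd (mul_pos (by linarith) hφs)
    nlinarith [mul_pos hd (show (0:ℝ) < t - 1 by linarith)]
  · rw [min_eq_right h]
    rcases eq_or_lt_of_le h with rfl | hlt
    · simp
    by_contra hcon
    push_neg at hcon
    have hd : 0 < t * φ 1 - φ t := by linarith
    have hφt : 0 < φ t := hp t ht
    have hε0 : 0 < min (t/2) ((t * φ 1 - φ t) / (φ 1 + 1)) := lt_min (by linarith) (by positivity)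
    set ε := min (t/2) ((t * φ 1 - φ t) / (φ 1 + 1)) with hε
    have hεt : ε < t := lt_of_le_of_lt (min_le_left _ _) (by linarith)
    have hεd : ε * φ 1 < t * φ 1 - φ t := by
      have h1 : ε ≤ (t * φ 1 - φ t) / (φ 1 + 1) := min_le_right _ _
      have h2 : ε * (φ 1 + 1) ≤ t * φ 1 - φ t := by
        rw [← le_div_iff₀ (by positivity)]
        exact h1
      nlinarith
    have hch := concave_chord hc hε0 hεt hlt
    have hφε : 0 < φ ε := hp ε hε0
    have e1 : 0 ≤ (1 - t) * φ ε := mul_nonneg (by linarith) hφε.le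
    have e2 : 0 ≤ ε * φ t := mul_nonneg hε0.le hφt.le
    nlinarith
lemma Kc_ge_norm {t : ℝ} (ht : Real.sqrt 2 ≤ t) (b : ℝ × ℝ) :
    Real.sqrt (b.1^2 + b.2^2) ≤ Kcouple t b := by
  refine Kc_lb t b _ (fun β => ?_)
  have h2 : 0 ≤ max |β.1| |β.2| := le_trans (abs_nonneg _) (le_max_left _ _)
  have tri := sqrt_tri (b.1 - β.1) (b.2 - β.2) β.1 β.2
  simp only [sub_add_cancel] at tri
  have h3 : Real.sqrt (β.1^2 + β.2^2) ≤ t * max |β.1| |β.2| :=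
    le_trans (norm_le_sqrt2_max β.1 β.2) (mul_le_mul_of_nonneg_right ht h2)
  linarith

lemma Kc_ge_half (b : ℝ × ℝ) :
    Real.sqrt (b.1^2 + b.2^2) ≤ Real.sqrt 2 * Kcouple 1 b := by
  have h2 : (0:ℝ) < Real.sqrt 2 := by positivity
  rw [← div_le_iff₀' h2]
  refine Kc_lb 1 b _ (fun β => ?_)
  have hm : 0 ≤ max |β.1| |β.2| := le_trans (abs_nonneg _) (le_max_left _ _)
  have tri := sqrt_tri (b.1 - β.1) (b.2 - β.2) β.1 β.2
  simp only [sub_add_cancel] at tri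
  have h3 : Real.sqrt (β.1^2 + β.2^2) ≤ Real.sqrt 2 * max |β.1| |β.2| := norm_le_sqrt2_max β.1 β.2
  have h4 : (1:ℝ) ≤ Real.sqrt 2 := by
    rw [show (1:ℝ) = Real.sqrt 1 by simp]
    exact Real.sqrt_le_sqrt (by norm_num)
  have h5 := Real.sqrt_nonneg ((b.1 - β.1) ^ 2 + (b.2 - β.2) ^ 2)
  rw [div_le_iff₀ h2]
  have : Real.sqrt ((b.1 - β.1) ^ 2 + (b.2 - β.2) ^ 2) ≤
      Real.sqrt 2 * Real.sqrt ((b.1 - β.1) ^ 2 + (b.2 - β.2) ^ 2) := by nlinarith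
  nlinarith

lemma Kc_ge_fst {t : ℝ} (ht : 1 ≤ t) (b : ℝ × ℝ) : b.1 ≤ Kcouple t b := by
  refine Kc_lb t b _ (fun β => ?_)
  have hm : |β.1| ≤ max |β.1| |β.2| := le_max_left _ _
  have hm0 : 0 ≤ max |β.1| |β.2| := le_trans (abs_nonneg _) hm
  have h1 : |b.1 - β.1| ≤ Real.sqrt ((b.1 - β.1) ^ 2 + (b.2 - β.2) ^ 2) := by
    calc |b.1 - β.1| = Real.sqrt ((b.1 - β.1)^2) := (Real.sqrt_sq_eq_abs _).symm
      _ ≤ _ := Real.sqrt_le_sqrt (by nlinarith [sq_nonneg (b.2 - β.2)])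
  have h2 : |β.1| ≤ t * max |β.1| |β.2| := by nlinarith [abs_nonneg β.1]
  have : b.1 ≤ |b.1 - β.1| + |β.1| := by
    have := abs_sub_abs_le_abs_sub b.1 β.1
    have := le_abs_self b.1
    have := le_abs_self β.1
    have := neg_abs_le β.1
    linarith [abs_nonneg (b.1 - β.1), le_abs_self (b.1 - β.1), abs_sub_comm b.1 β.1]
  linarith

lemma Kc_le_min_norm {t : ℝ} (ht : 0 < t) (b : ℝ × ℝ) :
    Kcouple t b ≤ min 1 t * Real.sqrt (b.1^2 + b.2^2) := by
  rcases le_total 1 t with h | h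
  · rw [min_eq_left h]
    have := Kc_ub t ht.le b 0
    simpa using this
  · rw [min_eq_right h]
    have := Kc_ub t ht.le b b
    simp only [sub_self] at this
    have h0 : Real.sqrt ((0:ℝ)^2 + 0^2) = 0 := by simp
    have hmax := max_le_norm b.1 b.2
    calc Kcouple t b ≤ Real.sqrt (0^2 + 0^2) + t * max |b.1| |b.2| := by
          simpa using this
      _ = t * max |b.1| |b.2| := by rw [h0]; ring
      _ ≤ t * Real.sqrt (b.1^2 + b.2^2) := mul_le_mul_of_nonneg_left hmax ht.le
lemma kdiv_sqrt2 : KDivConst (Real.sqrt 2) := by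
  intro a φ hpos hconc hsum hK
  set S := ∑' n, φ n 1 with hS
  have hSpos : 0 < S := Summable.tsum_pos hsum (fun i => (hpos i 1 one_pos).le) 0 (hpos 0 1 one_pos)
  refine ⟨fun n => ((φ n 1 / S) * a.1, (φ n 1 / S) * a.2), ?_, ?_⟩
  · have hps : Tendsto (fun N => ∑ n ∈ Finset.range N, φ n 1) atTop (𝓝 S) :=
      hsum.hasSum.tendsto_sum_nat
    have hc : Tendsto (fun N => (∑ n ∈ Finset.range N, φ n 1) / S) atTop (𝓝 1) := by
      have := hps.div_const S
      rwa [div_self hSpos.ne'] at this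
    have h1 : Tendsto (fun N => ((∑ n ∈ Finset.range N, φ n 1) / S) * a.1) atTop (𝓝 a.1) := by
      have := hc.mul_const a.1
      rwa [one_mul] at this
    have h2 : Tendsto (fun N => ((∑ n ∈ Finset.range N, φ n 1) / S) * a.2) atTop (𝓝 a.2) := by
      have := hc.mul_const a.2
      rwa [one_mul] at this
    have heq : (fun N => ∑ n ∈ Finset.range N,
        ((φ n 1 / S) * a.1, (φ n 1 / S) * a.2)) = fun N =>
        (((∑ n ∈ Finset.range N, φ n 1) / S) * a.1,
         ((∑ n ∈ Finset.range N, φ n 1) / S) * a.2) := by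
      funext N
      apply Prod.ext
      · simp only [Prod.fst_sum, Finset.sum_div, Finset.sum_mul]
      · simp only [Prod.snd_sum, Finset.sum_div, Finset.sum_mul]
    rw [heq]
    have := h1.prodMk_nhds h2
    simpa using this
  · intro n t ht
    have hlam : 0 ≤ φ n 1 / S := div_nonneg (hpos n 1 one_pos).le hSpos.le
    have hmin : (0:ℝ) ≤ min 1 t := le_min (by norm_num) ht.le |>.trans_eq rfl |> fun h => h
    calc Kcouple t ((φ n 1 / S) * a.1, (φ n 1 / S) * a.2)
        ≤ min 1 t * Real.sqrt (((φ n 1 / S) * a.1)^2 + ((φ n 1 / S) * a.2)^2) :=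
          Kc_le_min_norm ht _
      _ = min 1 t * ((φ n 1 / S) * Real.sqrt (a.1^2 + a.2^2)) := by
          rw [show ((φ n 1 / S) * a.1)^2 + ((φ n 1 / S) * a.2)^2
              = (φ n 1 / S)^2 * (a.1^2 + a.2^2) by ring,
            Real.sqrt_mul (sq_nonneg _), Real.sqrt_sq hlam]
      _ ≤ min 1 t * ((φ n 1 / S) * (Real.sqrt 2 * S)) := by
          have hna : Real.sqrt (a.1^2 + a.2^2) ≤ Real.sqrt 2 * S := by
            calc Real.sqrt (a.1^2 + a.2^2) ≤ Real.sqrt 2 * Kcouple 1 a := Kc_ge_half a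
              _ ≤ Real.sqrt 2 * S :=
                  mul_le_mul_of_nonneg_left (hK 1 one_pos) (Real.sqrt_nonneg 2)
          exact mul_le_mul_of_nonneg_left
            (mul_le_mul_of_nonneg_left hna hlam) hmin
      _ = Real.sqrt 2 * (min 1 t * φ n 1) := by
          field_simp
      _ ≤ Real.sqrt 2 * φ n t :=
          mul_le_mul_of_nonneg_left (concave_pos_lower (hconc n) (hpos n) t ht)
            (Real.sqrt_nonneg 2)
lemma Kc_nonneg {t : ℝ} (ht : 0 ≤ t) (b : ℝ × ℝ) : 0 ≤ Kcouple t b := by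
  refine Kc_lb t b 0 (fun β => ?_)
  have h1 := Real.sqrt_nonneg ((b.1 - β.1) ^ 2 + (b.2 - β.2) ^ 2)
  have h2 : 0 ≤ max |β.1| |β.2| := le_trans (abs_nonneg _) (le_max_left _ _)
  positivity

set_option maxHeartbeats 1000000 in
lemma lower_bound {C : ℝ} (h : KDivConst C) : (1004/1000 : ℝ) ≤ C := by
  by_contra hcon
  push_neg at hcon
  have hr5sq : Real.sqrt 5 ^ 2 = 5 := Real.sq_sqrt (by norm_num)
  have hr5lb : (2:ℝ) ≤ Real.sqrt 5 := by
    rw [show (2:ℝ) = Real.sqrt (2^2) from (Real.sqrt_sq (by norm_num)).symm]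
    exact Real.sqrt_le_sqrt (by norm_num)
  have hr5ub : Real.sqrt 5 ≤ 2.23607 := by
    rw [show (2.23607:ℝ) = Real.sqrt (2.23607^2) from (Real.sqrt_sq (by norm_num)).symm]
    exact Real.sqrt_le_sqrt (by norm_num)
  have hs2lb : (1.41:ℝ) ≤ Real.sqrt 2 := by
    rw [show (1.41:ℝ) = Real.sqrt (1.41^2) from (Real.sqrt_sq (by norm_num)).symm]
    exact Real.sqrt_le_sqrt (by norm_num)
  have hs2one : (1:ℝ) ≤ Real.sqrt 2 := by linarith
  have hs2pos : (0:ℝ) < Real.sqrt 2 := by linarith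
  have h51s2 : Real.sqrt 5 - 1 ≤ Real.sqrt 2 := by linarith
  have h51one : (1:ℝ) ≤ Real.sqrt 5 - 1 := by linarith
  set φ : ℕ → ℝ → ℝ := fun n t =>
    if n = 0 then min t 1 else if n = 1 then min t (Real.sqrt 5 - 1)
    else (1/100) * (1/2)^n * min t 1 with hφ
  have hφ0 : ∀ t, φ 0 t = min t 1 := fun t => rfl
  have hφ1 : ∀ t, φ 1 t = min t (Real.sqrt 5 - 1) := fun t => rfl
  have hφ2 : ∀ n t, φ (2+n) t = (1/100) * (1/2)^(2+n) * min t 1 := by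
    intro n t
    simp only [hφ]
    rw [if_neg (by omega), if_neg (by omega)]
  have hpos : ∀ n t, 0 < t → 0 < φ n t := by
    intro n t ht
    have hm1 : 0 < min t 1 := lt_min ht one_pos
    rcases n with _ | _ | n
    · rw [hφ0]; exact hm1
    · rw [hφ1]; exact lt_min ht (by linarith)
    · have e : n + 1 + 1 = 2 + n := by omega
      rw [e, hφ2]
      positivity
  have hconc : ∀ n, ConcaveOn ℝ (Set.Ioi (0:ℝ)) (φ n) := by
    intro n
    rcases n with _ | _ | n
    · exact concaveOn_min_const 1
    · exact concaveOn_min_const (Real.sqrt 5 - 1)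
    · have e : n + 1 + 1 = 2 + n := by omega
      rw [e]
      have hc := (concaveOn_min_const (1:ℝ)).smul
        (show (0:ℝ) ≤ (1/100) * (1/2)^(2+n) by positivity)
      have heq : φ (2 + n) = fun t => (1/100) * (1/2)^(2+n) * min t 1 :=
        funext fun t => hφ2 n t
      rw [heq]
      exact hc
  have hsum : Summable (fun n => φ n 1) := by
    apply Summable.of_nonneg_of_le (f := fun n => 4 * (1/2:ℝ)^n)
      (fun n => (hpos n 1 one_pos).le)
    · intro n
      rcases n with _ | _ | n
      · rw [hφ0]; norm_num
      · rw [hφ1]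
        calc min (1:ℝ) (Real.sqrt 5 - 1) ≤ 1 := min_le_left _ _
          _ ≤ 4 * (1/2:ℝ)^1 := by norm_num
      · have e : n + 1 + 1 = 2 + n := by omega
        rw [e, hφ2, min_self]
        have h2 : (0:ℝ) < (1/2:ℝ)^(2+n) := by positivity
        nlinarith
    · exact (summable_geometric_two).mul_left 4
  have hsummt : ∀ t : ℝ, 0 < t → Summable (fun n => φ n t) := by
    intro t ht
    apply Summable.of_nonneg_of_le (f := fun n => (4*(1+t)) * (1/2:ℝ)^n)
      (fun n => (hpos n t ht).le)
    · intro n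
      rcases n with _ | _ | n
      · rw [hφ0]
        simp only [pow_zero, mul_one]
        nlinarith [min_le_right t 1]
      · rw [hφ1]
        have h1 : min t (Real.sqrt 5 - 1) ≤ Real.sqrt 5 - 1 := min_le_right _ _
        have h2 : Real.sqrt 5 - 1 ≤ 2 := by linarith
        have h3 : (4:ℝ) * (1+t) * (1/2)^1 = 2*(1+t) := by ring
        rw [h3]
        nlinarith
      · have e : n + 1 + 1 = 2 + n := by omega
        rw [e, hφ2]
        have h1 : min t 1 ≤ 1 := min_le_right _ _
        have h2 : (0:ℝ) < (1/2:ℝ)^(2+n) := by positivity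
        have h3 : (0:ℝ) ≤ min t 1 := le_min ht.le one_pos.le
        have h4 : (1/100:ℝ)*(1/2)^(2+n)*(min t 1) ≤ (1/2)^(2+n) := by nlinarith
        nlinarith
    · exact (summable_geometric_two).mul_left _
  have hmaj : ∀ t : ℝ, 0 < t → Kcouple t ((2:ℝ),(1:ℝ)) ≤ ∑' n, φ n t := by
    intro t ht
    have hK2 : Kcouple t ((2:ℝ),(1:ℝ)) ≤ φ 0 t + φ 1 t := by
      rw [hφ0, hφ1]
      rcases le_total t 1 with h1 | h1
      · have := Kc_ub t ht.le ((2:ℝ),(1:ℝ)) ((2:ℝ),(1:ℝ))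
        simp only [sub_self] at this
        have heval : Real.sqrt ((0:ℝ)^2 + 0^2) = 0 := by simp
        rw [min_eq_left h1, min_eq_left (by linarith : t ≤ Real.sqrt 5 - 1)]
        have hmx : max |(2:ℝ)| |(1:ℝ)| = 2 := by
          rw [abs_of_pos (by norm_num : (0:ℝ) < 2), abs_of_pos one_pos]
          norm_num
        calc Kcouple t ((2:ℝ),(1:ℝ)) ≤ Real.sqrt (0^2+0^2) + t * max |(2:ℝ)| |(1:ℝ)| := by
              simpa using this
          _ = t + t := by rw [heval, hmx]; ring
      · rcases le_total t (Real.sqrt 5 - 1) with h2 | h2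
        · have := Kc_ub t ht.le ((2:ℝ),(1:ℝ)) ((1:ℝ),(1:ℝ))
          rw [min_eq_right h1, min_eq_left h2]
          have hmx : max |(1:ℝ)| |(1:ℝ)| = 1 := by simp
          calc Kcouple t ((2:ℝ),(1:ℝ))
              ≤ Real.sqrt (((2:ℝ) - 1)^2 + ((1:ℝ) - 1)^2) + t * max |(1:ℝ)| |(1:ℝ)| := this
            _ = 1 + t := by rw [hmx]; norm_num
        · have := Kc_ub t ht.le ((2:ℝ),(1:ℝ)) ((0:ℝ),(0:ℝ))
          rw [min_eq_right h1, min_eq_right h2]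
          have hmx : max |(0:ℝ)| |(0:ℝ)| = 0 := by simp
          calc Kcouple t ((2:ℝ),(1:ℝ))
              ≤ Real.sqrt (((2:ℝ) - 0)^2 + ((1:ℝ) - 0)^2) + t * max |(0:ℝ)| |(0:ℝ)| := this
            _ = Real.sqrt 5 := by rw [hmx]; norm_num
            _ = 1 + (Real.sqrt 5 - 1) := by ring
    refine le_trans hK2 ?_
    have : φ 0 t + φ 1 t = ∑ n ∈ ({0,1} : Finset ℕ), φ n t := by
      rw [Finset.sum_pair (by norm_num : (0:ℕ) ≠ 1)]
    rw [this]
    exact Summable.sum_le_tsum _ (fun i _ => (hpos i t ht).le) (hsummt t ht)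
  obtain ⟨b, hb, hKb⟩ := h ((2:ℝ),(1:ℝ)) φ hpos hconc hsum hmaj
  -- basic bounds
  have hC0 : 0 ≤ C := by
    have h1 := hKb 0 1 one_pos
    have h2 := Kc_nonneg (by norm_num : (0:ℝ) ≤ 1) (b 0)
    rw [hφ0] at h1
    simp only [min_self] at h1
    linarith
  have hb0 : Real.sqrt ((b 0).1^2 + (b 0).2^2) ≤ C := by
    have h1 := hKb 0 (Real.sqrt 2) hs2pos
    rw [hφ0, min_eq_right hs2one] at h1
    have h2 := Kc_ge_norm (le_refl (Real.sqrt 2)) (b 0)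
    linarith
  have hb1n : Real.sqrt ((b 1).1^2 + (b 1).2^2) ≤ C * (Real.sqrt 5 - 1) := by
    have h1 := hKb 1 (Real.sqrt 2) hs2pos
    rw [hφ1, min_eq_right h51s2] at h1
    have h2 := Kc_ge_norm (le_refl (Real.sqrt 2)) (b 1)
    linarith
  have hb1x : (b 1).1 ≤ C := by
    have h1 := hKb 1 1 one_pos
    rw [hφ1, min_eq_left h51one] at h1
    have h2 := Kc_ge_fst (le_refl (1:ℝ)) (b 1)
    linarith
  have htail : ∀ n : ℕ, Real.sqrt ((b (2+n)).1^2 + (b (2+n)).2^2) ≤ C * ((1/100) * (1/2)^(2+n)) := by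
    intro n
    have h1 := hKb (2+n) (Real.sqrt 2) hs2pos
    rw [hφ2, min_eq_right hs2one, mul_one] at h1
    have h2 := Kc_ge_norm (le_refl (Real.sqrt 2)) (b (2+n))
    linarith
  -- functional bounds
  have fb0 : 2*(b 0).1 + (b 0).2 ≤ 2.23607 * C := by
    have h1 := cs2 2 1 (b 0).1 (b 0).2
    rw [show (2:ℝ)^2 + 1^2 = 5 by norm_num] at h1
    have h2 : Real.sqrt 5 * Real.sqrt ((b 0).1^2 + (b 0).2^2) ≤ 2.23607 * C :=
      mul_le_mul hr5ub hb0 (Real.sqrt_nonneg _) (by norm_num)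
    linarith
  have fb1 : 2*(b 1).1 + (b 1).2 ≤ (5/8) * C + 1.7002 * (1.23607 * C) := by
    have h1 := cs2 (11/8) 1 (b 1).1 (b 1).2
    have hq : Real.sqrt ((11/8:ℝ)^2 + 1^2) ≤ 1.7002 := by
      rw [show (1.7002:ℝ) = Real.sqrt (1.7002^2) from (Real.sqrt_sq (by norm_num)).symm]
      exact Real.sqrt_le_sqrt (by norm_num)
    have h3 : Real.sqrt ((b 1).1^2 + (b 1).2^2) ≤ 1.23607 * C := by
      have : C * (Real.sqrt 5 - 1) ≤ C * 1.23607 :=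
        mul_le_mul_of_nonneg_left (by linarith) hC0
      linarith [hb1n, this]
    have h4 : Real.sqrt ((11/8:ℝ)^2 + 1^2) * Real.sqrt ((b 1).1^2 + (b 1).2^2)
        ≤ 1.7002 * (1.23607 * C) := by
      apply mul_le_mul hq h3 (Real.sqrt_nonneg _) (by norm_num)
    have h5 : (5/8:ℝ) * (b 1).1 ≤ (5/8) * C := by linarith
    nlinarith [h1, h4, h5]
  have ftail : ∀ n : ℕ, 2*(b (2+n)).1 + (b (2+n)).2 ≤ (3*C/400) * (1/2)^n := by
    intro n
    have h1 := cs2 2 1 (b (2+n)).1 (b (2+n)).2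
    rw [show (2:ℝ)^2 + 1^2 = 5 by norm_num] at h1
    have h2 : Real.sqrt 5 * Real.sqrt ((b (2+n)).1^2 + (b (2+n)).2^2)
        ≤ 3 * (C * ((1/100) * (1/2)^(2+n))) := by
      apply mul_le_mul (by linarith : Real.sqrt 5 ≤ 3) (htail n) (Real.sqrt_nonneg _) (by norm_num)
    have h3 : 3 * (C * ((1/100) * (1/2:ℝ)^(2+n))) = (3*C/400) * (1/2)^n := by
      rw [pow_add]
      ring
    linarith [h1, h2, h3.le, h3.ge]
  have hsumtail : ∀ M : ℕ, ∑ i ∈ Finset.range M, (2*(b (2+i)).1 + (b (2+i)).2) ≤ 3*C/200 := by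
    intro M
    calc ∑ i ∈ Finset.range M, (2*(b (2+i)).1 + (b (2+i)).2)
        ≤ ∑ i ∈ Finset.range M, (3*C/400) * (1/2:ℝ)^i :=
          Finset.sum_le_sum (fun i _ => ftail i)
      _ = (3*C/400) * ∑ i ∈ Finset.range M, (1/2:ℝ)^i := by rw [Finset.mul_sum]
      _ ≤ (3*C/400) * 2 := by
          apply mul_le_mul_of_nonneg_left ?_ (by positivity)
          exact_mod_cast sum_geometric_two_le M
      _ = 3*C/200 := by ring
  -- limit
  have hfst : Tendsto (fun N => (∑ n ∈ Finset.range N, b n).1) atTop (𝓝 (2:ℝ)) :=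
    ((continuous_fst).tendsto ((2:ℝ),(1:ℝ))).comp hb
  have hsnd : Tendsto (fun N => (∑ n ∈ Finset.range N, b n).2) atTop (𝓝 (1:ℝ)) :=
    ((continuous_snd).tendsto ((2:ℝ),(1:ℝ))).comp hb
  have hTf : Tendsto (fun N => 2*(∑ n ∈ Finset.range N, b n).1 + (∑ n ∈ Finset.range N, b n).2)
      atTop (𝓝 (5:ℝ)) := by
    have h5 : (5:ℝ) = 2*2+1 := by norm_num
    rw [h5]
    exact (hfst.const_mul 2).add hsnd
  have key : ∀ M : ℕ, 2*(∑ n ∈ Finset.range (2+M), b n).1 + (∑ n ∈ Finset.range (2+M), b n).2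
      ≤ 2.23607 * C + ((5/8) * C + 1.7002 * (1.23607 * C)) + 3*C/200 := by
    intro M
    have hexp : 2*(∑ n ∈ Finset.range (2+M), b n).1 + (∑ n ∈ Finset.range (2+M), b n).2
        = ∑ n ∈ Finset.range (2+M), (2*(b n).1 + (b n).2) := by
      rw [Prod.fst_sum, Prod.snd_sum, Finset.mul_sum, ← Finset.sum_add_distrib]
    rw [hexp, Finset.sum_range_add (fun n => 2*(b n).1 + (b n).2) 2 M]
    have h2 : ∑ n ∈ Finset.range 2, (2*(b n).1 + (b n).2)
        = (2*(b 0).1 + (b 0).2) + (2*(b 1).1 + (b 1).2) := by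
      simp [Finset.sum_range_succ]
    rw [h2]
    have := hsumtail M
    linarith [fb0, fb1]
  have hfive : (5:ℝ) ≤ 2.23607 * C + ((5/8) * C + 1.7002 * (1.23607 * C)) + 3*C/200 := by
    have hcomp : Tendsto (fun M : ℕ =>
        2*(∑ n ∈ Finset.range (M+2), b n).1 + (∑ n ∈ Finset.range (M+2), b n).2)
        atTop (𝓝 (5:ℝ)) :=
      hTf.comp (tendsto_add_atTop_nat 2)
    have heq : (fun M : ℕ =>
        2*(∑ n ∈ Finset.range (M+2), b n).1 + (∑ n ∈ Finset.range (M+2), b n).2)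
        = (fun M : ℕ =>
        2*(∑ n ∈ Finset.range (2+M), b n).1 + (∑ n ∈ Finset.range (2+M), b n).2) := by
      funext M
      rw [Nat.add_comm]
    rw [heq] at hcomp
    exact le_of_tendsto hcomp (Eventually.of_forall key)
  nlinarith [hfive, hcon, hC0]

/-- The couple `(ℓ²₂, ℓ∞₂)` is not exactly K-divisible: `γ(X) > 1`. -/
theorem gamma_X_gt_one : 1 < sInf {C : ℝ | KDivConst C} := by
  have hne : {C : ℝ | KDivConst C}.Nonempty := ⟨Real.sqrt 2, kdiv_sqrt2⟩
  have hlb : ∀ C ∈ {C : ℝ | KDivConst C}, (1004/1000 : ℝ) ≤ C :=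
    fun C hC => lower_bound hC
  have h := le_csInf hne hlb
  linarith
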